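/- There exists a constant C > 0 such that for every smooth compactly supported function f : ℝ³ → ℝ, ‖Z₃f‖_{L²} ≤ C · ( ‖f‖_{L²} + ‖f‖_{L²}^{1/2} ‖Z₃²f‖_{L²}^{1/2} ). -/

import Mathlib

open MeasureTheory
open Set Filter Topology

/-- Vertical partial derivative `∂₃`. -/
noncomputable def pd3 (f : (Fin 3 → ℝ) → ℝ) : (Fin 3 → ℝ) → ℝ :=
  fun x => fderiv ℝ f x (Pi.single 2 1)

/-- The conormal vector field `Z₃ f = (x₃/(1+x₃)) ∂₃ f`. -/
noncomputable def Z3 (f : (Fin 3 → ℝ) → ℝ) : (Fin 3 → ℝ) → ℝ :=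
  fun x => (x 2 / (1 + x 2)) * pd3 f x

/-- L² norm over the upper half-space `{x : x₃ > 0}` of ℝ³. -/
noncomputable def L2H (f : (Fin 3 → ℝ) → ℝ) : ℝ :=
  (eLpNorm f 2 (volume.restrict {x : Fin 3 → ℝ | 0 < x 2})).toReal

namespace S6

def H : Set (Fin 3 → ℝ) := {x | 0 < x 2}
def C : Set (Fin 3 → ℝ) := {x | 0 ≤ x 2}
def U : Set (Fin 3 → ℝ) := {x | -1 < x 2}

lemma measurableSet_H : MeasurableSet H :=
  measurableSet_lt measurable_const (measurable_pi_apply 2)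

lemma isOpen_U : IsOpen U := isOpen_lt continuous_const (continuous_apply 2)

lemma isClosed_C : IsClosed C := isClosed_le continuous_const (continuous_apply 2)

lemma C_subset_U : C ⊆ U := fun x hx => lt_of_lt_of_le (by norm_num) (show 0 ≤ x 2 from hx)

lemma H_subset_C : H ⊆ C := fun x hx => le_of_lt (show 0 < x 2 from hx)

variable {f : (Fin 3 → ℝ) → ℝ}

lemma contDiff_x2 : ContDiff ℝ (⊤:ℕ∞) (fun x : Fin 3 → ℝ => x 2) :=
  contDiff_pi.1 contDiff_id 2

lemma pd3_contDiff (hf : ContDiff ℝ (⊤:ℕ∞) f) : ContDiff ℝ (⊤:ℕ∞) (pd3 f) := by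
  have h1 : ContDiff ℝ (⊤:ℕ∞) (fderiv ℝ f) := hf.fderiv_right (by norm_cast)
  exact h1.clm_apply contDiff_const

lemma contDiffOn_Z3 (hf : ContDiff ℝ (⊤:ℕ∞) f) : ContDiffOn ℝ (⊤:ℕ∞) (Z3 f) U := by
  apply ContDiffOn.mul _ (pd3_contDiff hf).contDiffOn
  refine ContDiffOn.div contDiff_x2.contDiffOn
    (contDiff_const.add contDiff_x2).contDiffOn (fun x hx => ?_)
  have : -1 < x 2 := hx
  intro h; rw [add_comm] at h; nlinarith

lemma Z3_differentiableAt (hf : ContDiff ℝ (⊤:ℕ∞) f) {x : Fin 3 → ℝ} (hx : -1 < x 2) :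
    DifferentiableAt ℝ (Z3 f) x :=
  (((contDiffOn_Z3 hf).differentiableOn (by norm_cast)).differentiableAt
    (isOpen_U.mem_nhds hx))

lemma continuousOn_pd3_Z3 (hf : ContDiff ℝ (⊤:ℕ∞) f) : ContinuousOn (pd3 (Z3 f)) U := by
  have h1 : ContinuousOn (fderiv ℝ (Z3 f)) U :=
    (contDiffOn_Z3 hf).continuousOn_fderiv_of_isOpen isOpen_U (by norm_cast)
  exact h1.clm_apply continuousOn_const

lemma continuousOn_coeff : ContinuousOn (fun x : Fin 3 → ℝ => x 2 / (1 + x 2)) U := by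
  apply ContinuousOn.div (continuous_apply 2).continuousOn
    (continuous_const.add (continuous_apply 2)).continuousOn
  intro x hx; have : -1 < x 2 := hx; intro h; rw [add_comm] at h; simp only [Pi.add_apply] at h; nlinarith

lemma continuousOn_Z3 (hf : ContDiff ℝ (⊤:ℕ∞) f) : ContinuousOn (Z3 f) U :=
  continuousOn_coeff.mul (pd3_contDiff hf).continuous.continuousOn

lemma continuousOn_Z3Z3 (hf : ContDiff ℝ (⊤:ℕ∞) f) : ContinuousOn (Z3 (Z3 f)) U :=
  continuousOn_coeff.mul (continuousOn_pd3_Z3 hf)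

lemma hcs_pd3 (hs : HasCompactSupport f) : HasCompactSupport (pd3 f) := by
  apply hs.mono'
  intro x hx
  have : fderiv ℝ f x ≠ 0 := by
    intro h; apply hx; simp [pd3, h]
  exact support_fderiv_subset ℝ this

lemma hcs_Z3 (hs : HasCompactSupport f) : HasCompactSupport (Z3 f) := by
  have : Z3 f = (fun x : Fin 3 → ℝ => x 2 / (1 + x 2)) * (pd3 f) := rfl
  rw [this]
  exact (hcs_pd3 hs).mul_left

lemma hcs_pd3_Z3 (hs : HasCompactSupport f) : HasCompactSupport (pd3 (Z3 f)) :=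
  hcs_pd3 (hcs_Z3 hs)

lemma hcs_Z3Z3 (hs : HasCompactSupport f) : HasCompactSupport (Z3 (Z3 f)) :=
  hcs_Z3 (hcs_Z3 hs)

lemma meas_Z3 (g : (Fin 3 → ℝ) → ℝ) : Measurable (Z3 g) :=
  ((measurable_pi_apply 2).div (measurable_const.add (measurable_pi_apply 2))).mul
    (measurable_fderiv_apply_const ℝ g _)

/-- integrability on the half space from continuity on the closed half space plus
compact support -/
lemma integrableOn_H {g : (Fin 3 → ℝ) → ℝ} (hg : ContinuousOn g C)
    (hk : HasCompactSupport g) : IntegrableOn g H := by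
  have hsK : IsCompact (C ∩ tsupport g) := hk.inter_left isClosed_C
  have h1 : IntegrableOn g (C ∩ tsupport g) :=
    (hg.mono inter_subset_left).integrableOn_compact hsK
  have h2 : IntegrableOn g (H \ tsupport g) := by
    refine (integrableOn_zero).congr_fun (fun x hx => (image_eq_zero_of_notMem_tsupport hx.2).symm)
      (measurableSet_H.diff (isClosed_tsupport g).measurableSet)

  refine (IntegrableOn.union h1 h2).mono_set (fun x hx => ?_)
  by_cases h : x ∈ tsupport g
  · exact Or.inl ⟨H_subset_C hx, h⟩
  · exact Or.inr ⟨hx, h⟩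

end S6
namespace S6

lemma insertNth_eq (y : Fin 2 → ℝ) (t : ℝ) :
    Fin.insertNth (α := fun _ : Fin 3 => ℝ) 2 t y
      = Fin.insertNth (α := fun _ : Fin 3 => ℝ) 2 0 y + t • (Pi.single 2 1 : Fin 3 → ℝ) := by
  funext j
  refine Fin.succAboveCases (2 : Fin 3) ?_ (fun k => ?_) j
  · simp
  · simp [Fin.succAbove_ne]

lemma hasDerivAt_L (y : Fin 2 → ℝ) (t : ℝ) :
    HasDerivAt (fun s : ℝ => Fin.insertNth (α := fun _ : Fin 3 => ℝ) 2 s y)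
      (Pi.single 2 1 : Fin 3 → ℝ) t := by
  have h : (fun s : ℝ => Fin.insertNth (α := fun _ : Fin 3 => ℝ) 2 s y)
      = fun s : ℝ => Fin.insertNth (α := fun _ : Fin 3 => ℝ) 2 0 y
        + s • (Pi.single 2 1 : Fin 3 → ℝ) := by
    funext s; exact insertNth_eq y s
  rw [h]
  simpa using ((hasDerivAt_id t).smul_const ((Pi.single 2 1 : Fin 3 → ℝ))).const_add
    (Fin.insertNth (α := fun _ : Fin 3 => ℝ) 2 0 y)

lemma contDiff_L (y : Fin 2 → ℝ) :
    ContDiff ℝ (⊤:ℕ∞) (fun s : ℝ => Fin.insertNth (α := fun _ : Fin 3 => ℝ) 2 s y) := by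
  have h : (fun s : ℝ => Fin.insertNth (α := fun _ : Fin 3 => ℝ) 2 s y)
      = fun s : ℝ => Fin.insertNth (α := fun _ : Fin 3 => ℝ) 2 0 y
        + s • (Pi.single 2 1 : Fin 3 → ℝ) := by
    funext s; exact insertNth_eq y s
  rw [h]
  exact contDiff_const.add (contDiff_id.smul contDiff_const)

lemma hasDerivAt_phi {t : ℝ} (ht : -1 < t) :
    HasDerivAt (fun s : ℝ => s / (1 + s)) (1 / (1 + t)^2) t := by
  have hne : 1 + t ≠ 0 := by intro h; nlinarith
  have := (hasDerivAt_id t).div (((hasDerivAt_id t).const_add 1)) hne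
  exact this.congr_deriv (by simp only [id]; ring)

/-- the pointwise integrand of the integration-by-parts identity -/
noncomputable def Kf (f : (Fin 3 → ℝ) → ℝ) : (Fin 3 → ℝ) → ℝ :=
  fun x => Z3 f x ^ 2 + 1/(1 + x 2)^2 * (f x * Z3 f x) + f x * Z3 (Z3 f) x

lemma integrableOn_Ioi_aux {w : ℝ → ℝ} {R : ℝ} (hc : ContinuousOn w (Ici 0))
    (h0 : ∀ t, R < t → w t = 0) : IntegrableOn w (Ioi 0) := by
  have h1 : IntegrableOn w (Ioc 0 (max R 0)) := by
    exact ((hc.mono Icc_subset_Ici_self).integrableOn_compact isCompact_Icc).mono_set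
      Ioc_subset_Icc_self
  have h2 : IntegrableOn w (Ioi (max R 0)) := by
    refine (integrableOn_zero).congr_fun (fun t ht => ?_) measurableSet_Ioi
    exact (h0 t (lt_of_le_of_lt (le_max_left R 0) ht)).symm
  refine (h1.union h2).mono_set (fun t ht => ?_)
  by_cases h : t ≤ max R 0
  · exact Or.inl ⟨ht, h⟩
  · exact Or.inr (lt_of_not_ge h)

lemma key_line {f : (Fin 3 → ℝ) → ℝ} (hf : ContDiff ℝ (⊤:ℕ∞) f)
    (hs : HasCompactSupport f) (y : Fin 2 → ℝ) :
    ∫ t in Ioi (0:ℝ), Kf f (Fin.insertNth (α := fun _ : Fin 3 => ℝ) 2 t y) = 0 := by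
  obtain ⟨R, hR⟩ : ∃ R, tsupport f ⊆ Metric.closedBall 0 R :=
    hs.isBounded.subset_closedBall 0
  set L : ℝ → (Fin 3 → ℝ) := fun s => Fin.insertNth (α := fun _ : Fin 3 => ℝ) 2 s y with hLdef
  have hL2 : ∀ t, L t 2 = t := by
    intro t; simp only [hLdef]; exact Fin.insertNth_apply_same (α := fun _ : Fin 3 => ℝ) 2 t y
  have hLd : ∀ t, HasDerivAt L (Pi.single 2 1 : Fin 3 → ℝ) t := hasDerivAt_L y
  set h : ℝ → ℝ := fun t => f (L t) with hhdef
  set q : ℝ → ℝ := fun t => pd3 f (L t) with hqdef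
  have hq : ContDiff ℝ (⊤:ℕ∞) q := (pd3_contDiff hf).comp (contDiff_L y)
  have hh : ∀ t, HasDerivAt h (q t) t := by
    intro t
    exact ((hf.differentiable (by norm_cast)) (L t)).hasFDerivAt.comp_hasDerivAt t (hLd t)
  set g : ℝ → ℝ := fun t => t / (1 + t) * q t with hgdef
  have hgZ : ∀ t, Z3 f (L t) = g t := by
    intro t; simp only [Z3, hgdef, hqdef, hL2]
  set q' : ℝ → ℝ := deriv q with hq'def
  have hq' : ∀ t, HasDerivAt q (q' t) t := fun t =>
    ((hq.differentiable (by norm_cast)) t).hasDerivAt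
  set g' : ℝ → ℝ := fun t => 1/(1+t)^2 * q t + t/(1+t) * q' t with hg'def
  have hg : ∀ t, -1 < t → HasDerivAt g (g' t) t := fun t ht =>
    (hasDerivAt_phi ht).mul (hq' t)
  have hZ3Z3 : ∀ t, 0 < t → Z3 (Z3 f) (L t) = t/(1+t) * g' t := by
    intro t ht
    have hdiff : DifferentiableAt ℝ (Z3 f) (L t) :=
      Z3_differentiableAt hf (by rw [hL2]; linarith)
    have h1 : HasDerivAt (fun s => Z3 f (L s)) (fderiv ℝ (Z3 f) (L t) (Pi.single 2 1)) t :=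
      hdiff.hasFDerivAt.comp_hasDerivAt t (hLd t)
    have h2 : (fun s => Z3 f (L s)) = g := funext hgZ
    rw [h2] at h1
    have h3 := h1.unique (hg t (by linarith))
    show L t 2 / (1 + L t 2) * fderiv ℝ (Z3 f) (L t) (Pi.single 2 1) = _
    rw [h3, hL2]
  set F : ℝ → ℝ := fun t => t/(1+t) * (h t * g t) with hFdef
  set W : ℝ → ℝ := fun t => g t^2 + 1/(1+t)^2 * (h t * g t) + h t * (t/(1+t) * g' t) with hWdef
  have hWK : ∀ t ∈ Ioi (0:ℝ), Kf f (L t) = W t := by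
    intro t ht
    rw [mem_Ioi] at ht
    simp only [Kf, hWdef, hL2, hgZ t, hZ3Z3 t ht, hhdef]
  have hF : ∀ t ∈ Ioi (0:ℝ), HasDerivAt F (W t) t := by
    intro t ht
    rw [mem_Ioi] at ht
    have h1 : HasDerivAt F (1/(1+t)^2 * (h t * g t) + t/(1+t) * (q t * g t + h t * g' t)) t :=
      (hasDerivAt_phi (by linarith)).mul ((hh t).mul (hg t (by linarith)))
    convert h1 using 1
    have : g t = t/(1+t) * q t := rfl
    rw [hWdef]
    simp only
    rw [this]
    ring
  have hvan : ∀ t, R < t → h t = 0 ∧ q t = 0 := by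
    intro t htR
    have hnot : L t ∉ tsupport f := by
      intro hmem
      have := hR hmem
      rw [Metric.mem_closedBall, dist_zero_right] at this
      have h2 : |L t 2| ≤ ‖L t‖ := norm_le_pi_norm (L t) 2
      rw [hL2] at h2
      have hRt : 0 ≤ R := le_trans (abs_nonneg _) (le_trans h2 this)
      rw [abs_of_pos (lt_of_le_of_lt hRt htR)] at h2
      linarith [le_trans h2 this]
    constructor
    · show f (L t) = 0
      exact image_eq_zero_of_notMem_tsupport hnot
    · show pd3 f (L t) = 0
      have hz : fderiv ℝ f (L t) = 0 := by
        by_contra hne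
        exact hnot (support_fderiv_subset ℝ (Function.mem_support.2 hne))
      simp [pd3, hz]
  have hIci : ∀ t : ℝ, t ∈ Ici (0:ℝ) → (1:ℝ) + t ≠ 0 := by
    intro t ht h; rw [mem_Ici] at ht; nlinarith
  have hcont_phi : ContinuousOn (fun t : ℝ => t/(1+t)) (Ici 0) :=
    continuousOn_id.div (continuous_const.add continuous_id).continuousOn hIci
  have hcont_inv : ContinuousOn (fun t : ℝ => 1/(1+t)^2) (Ici 0) :=
    continuousOn_const.div ((continuous_const.add continuous_id).pow 2).continuousOn
      (fun t ht => pow_ne_zero 2 (hIci t ht))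
  have hq_cont : Continuous q := hq.continuous
  have hq'_cont : Continuous q' := hq.continuous_deriv (by norm_cast)
  have hh_cont : Continuous h := hf.continuous.comp (contDiff_L y).continuous
  have hg_cont : ContinuousOn g (Ici 0) := hcont_phi.mul hq_cont.continuousOn
  have hg'_cont : ContinuousOn g' (Ici 0) :=
    (hcont_inv.mul hq_cont.continuousOn).add (hcont_phi.mul hq'_cont.continuousOn)
  have hW_cont : ContinuousOn W (Ici 0) :=
    ((hg_cont.pow 2).add (hcont_inv.mul (hh_cont.continuousOn.mul hg_cont))).add
      (hh_cont.continuousOn.mul (hcont_phi.mul hg'_cont))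
  have hF_cont : ContinuousOn F (Ici 0) :=
    hcont_phi.mul (hh_cont.continuousOn.mul hg_cont)
  have hWvan : ∀ t, R < t → W t = 0 := by
    intro t ht
    obtain ⟨h0, q0⟩ := hvan t ht
    simp [hWdef, hgdef, h0, q0]
  have hWint : IntegrableOn W (Ioi 0) := integrableOn_Ioi_aux hW_cont hWvan
  have hFvan : ∀ᶠ t in atTop, F t = 0 := by
    filter_upwards [eventually_gt_atTop R] with t ht
    simp [hFdef, (hvan t ht).1]
  have hFt : Tendsto F atTop (𝓝 0) :=
    tendsto_const_nhds.congr' (hFvan.mono fun t ht => ht.symm)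
  have hFc : ContinuousWithinAt F (Ici 0) 0 := hF_cont 0 self_mem_Ici
  have hint := integral_Ioi_of_hasDerivAt_of_tendsto hFc hF hWint hFt
  have hF0 : F 0 = 0 := by simp [hFdef]
  calc ∫ t in Ioi (0:ℝ), Kf f (L t)
      = ∫ t in Ioi (0:ℝ), W t := setIntegral_congr_fun measurableSet_Ioi hWK
    _ = 0 - F 0 := hint
    _ = 0 := by rw [hF0]; ring


lemma hcs_Kf {f : (Fin 3 → ℝ) → ℝ} (hs : HasCompactSupport f) : HasCompactSupport (Kf f) := by
  have h1 : HasCompactSupport (fun x : Fin 3 → ℝ => Z3 f x ^ 2) := by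
    apply (hcs_Z3 hs).mono'
    intro x hx
    have : Z3 f x ≠ 0 := by intro h; apply hx; simp [h]
    exact subset_tsupport _ this
  have h2 : HasCompactSupport (fun x : Fin 3 → ℝ => 1/(1 + x 2)^2 * (f x * Z3 f x)) := by
    have : HasCompactSupport (fun x : Fin 3 → ℝ => f x * Z3 f x) := (hcs_Z3 hs).mul_left
    exact this.mul_left
  have h3 : HasCompactSupport (fun x : Fin 3 → ℝ => f x * Z3 (Z3 f) x) :=
    (hcs_Z3Z3 hs).mul_left
  exact (h1.add h2).add h3

lemma continuousOn_Kf {f : (Fin 3 → ℝ) → ℝ} (hf : ContDiff ℝ (⊤:ℕ∞) f) :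
    ContinuousOn (Kf f) C := by
  have hb : ContinuousOn (fun x : Fin 3 → ℝ => 1/(1 + x 2)^2) C := by
    apply continuousOn_const.div (((continuous_const.add (continuous_apply 2)).pow 2).continuousOn)
    intro x hx
    have : (0:ℝ) ≤ x 2 := hx
    simp only [Pi.add_apply, Pi.pow_apply]; positivity
  have hZ : ContinuousOn (Z3 f) C := (continuousOn_Z3 hf).mono C_subset_U
  have hZZ : ContinuousOn (Z3 (Z3 f)) C := (continuousOn_Z3Z3 hf).mono C_subset_U
  exact ((hZ.pow 2).add (hb.mul (hf.continuous.continuousOn.mul hZ))).add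
    (hf.continuous.continuousOn.mul hZZ)

lemma key_H {f : (Fin 3 → ℝ) → ℝ} (hf : ContDiff ℝ (⊤:ℕ∞) f)
    (hs : HasCompactSupport f) : ∫ x in H, Kf f x = 0 := by
  have hint : IntegrableOn (Kf f) H := integrableOn_H (continuousOn_Kf hf) (hcs_Kf hs)
  set e := MeasurableEquiv.piFinSuccAbove (fun _ : Fin 3 => ℝ) 2 with hedef
  have hmp : MeasurePreserving e volume volume := volume_preserving_piFinSuccAbove _ 2
  set S : Set (ℝ × (Fin 2 → ℝ)) := Ioi 0 ×ˢ univ with hSdef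
  have hSm : MeasurableSet S := measurableSet_Ioi.prod MeasurableSet.univ
  have hHpre : H = e ⁻¹' S := by
    ext x
    simp [H, hedef, hSdef, MeasurableEquiv.piFinSuccAbove_apply]
  have h1 : ∫ x in H, Kf f x = ∫ p in S, Kf f (e.symm p) := by
    rw [hHpre]
    rw [← hmp.setIntegral_preimage_emb e.measurableEmbedding (fun p => Kf f (e.symm p)) S]
    refine setIntegral_congr_fun (hmp.measurable hSm) (fun x hx => ?_)
    simp
  have h2 : Integrable (fun p : ℝ × (Fin 2 → ℝ) => Kf f (e.symm p))
      ((volume.restrict (Ioi 0)).prod volume) := by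
    have hres : MeasurePreserving e (volume.restrict H) (volume.restrict S) := by
      rw [hHpre]; exact hmp.restrict_preimage hSm
    have h3 : Integrable ((fun p => Kf f (e.symm p)) ∘ e) (volume.restrict H) := by
      apply hint.congr_fun ?_ measurableSet_H
      intro x hx; simp
    have h4 := (hres.integrable_comp_emb e.measurableEmbedding).mp h3
    have h5 : (volume.restrict (Ioi (0:ℝ))).prod (volume : Measure (Fin 2 → ℝ))
        = (volume : Measure (ℝ × (Fin 2 → ℝ))).restrict S := by
      calc (volume.restrict (Ioi (0:ℝ))).prod (volume : Measure (Fin 2 → ℝ))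
          = (volume.restrict (Ioi (0:ℝ))).prod ((volume : Measure (Fin 2 → ℝ)).restrict univ) := by
            rw [Measure.restrict_univ]
        _ = ((volume : Measure ℝ).prod (volume : Measure (Fin 2 → ℝ))).restrict (Ioi 0 ×ˢ univ) :=
            Measure.prod_restrict _ _
        _ = (volume : Measure (ℝ × (Fin 2 → ℝ))).restrict S := by
            rw [← Measure.volume_eq_prod, hSdef]
    rw [h5]
    exact h4
  have h5 : (volume.restrict (Ioi (0:ℝ))).prod (volume : Measure (Fin 2 → ℝ))
      = (volume : Measure (ℝ × (Fin 2 → ℝ))).restrict S := by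
    calc (volume.restrict (Ioi (0:ℝ))).prod (volume : Measure (Fin 2 → ℝ))
        = (volume.restrict (Ioi (0:ℝ))).prod ((volume : Measure (Fin 2 → ℝ)).restrict univ) := by
          rw [Measure.restrict_univ]
      _ = ((volume : Measure ℝ).prod (volume : Measure (Fin 2 → ℝ))).restrict (Ioi 0 ×ˢ univ) :=
          Measure.prod_restrict _ _
      _ = (volume : Measure (ℝ × (Fin 2 → ℝ))).restrict S := by
          rw [← Measure.volume_eq_prod, hSdef]
  rw [h1, ← h5, integral_prod_symm _ h2]
  have h6 : ∀ y : Fin 2 → ℝ, ∫ t in Ioi (0:ℝ), Kf f (e.symm (t, y)) = 0 := by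
    intro y
    have he : ∀ t : ℝ, e.symm (t, y) = Fin.insertNth (α := fun _ : Fin 3 => ℝ) 2 t y := by
      intro t
      rw [hedef]
      rfl
    simp_rw [he]
    exact key_line hf hs y
  simp_rw [h6]
  simp


lemma hcs_sq {g : (Fin 3 → ℝ) → ℝ} (hk : HasCompactSupport g) :
    HasCompactSupport (fun x => g x ^ 2) := by
  apply hk.mono'
  intro x hx
  have : g x ≠ 0 := by intro h; apply hx; simp [h]
  exact subset_tsupport _ this

lemma memL2 {g : (Fin 3 → ℝ) → ℝ} (hm : AEStronglyMeasurable g (volume.restrict H))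
    (hc : ContinuousOn g C) (hk : HasCompactSupport g) :
    MemLp g 2 (volume.restrict H) :=
  (memLp_two_iff_integrable_sq hm).mpr (integrableOn_H (hc.pow 2) (hcs_sq hk))

lemma L2H_eq {g : (Fin 3 → ℝ) → ℝ} (hm : MemLp g 2 (volume.restrict H)) :
    (eLpNorm g 2 (volume.restrict H)).toReal = Real.sqrt (∫ x in H, g x ^ 2) := by
  rw [hm.eLpNorm_eq_integral_rpow_norm two_ne_zero ENNReal.ofNat_ne_top]
  rw [ENNReal.toReal_ofReal (Real.rpow_nonneg (integral_nonneg (fun x => by positivity)) _)]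
  have h1 : ∀ x : Fin 3 → ℝ, ‖g x‖ ^ ((2:ENNReal).toReal) = g x ^ 2 := by
    intro x
    rw [ENNReal.toReal_ofNat, show ((2:ℝ)) = ((2:ℕ):ℝ) by norm_num, Real.rpow_natCast]
    simp [sq_abs]
  simp_rw [h1]
  rw [Real.sqrt_eq_rpow, one_div, ENNReal.toReal_ofNat]

lemma holder {u w : (Fin 3 → ℝ) → ℝ} (hu : MemLp u 2 (volume.restrict H))
    (hw : MemLp w 2 (volume.restrict H)) :
    ∫ x in H, |u x * w x| ≤ Real.sqrt (∫ x in H, u x ^ 2) * Real.sqrt (∫ x in H, w x ^ 2) := by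
  have hpq : Real.HolderConjugate 2 2 := Real.holderConjugate_iff.mpr ⟨one_lt_two, by norm_num⟩
  have h2 : (ENNReal.ofReal (2:ℝ)) = 2 := by norm_num
  have h := integral_mul_norm_le_Lp_mul_Lq hpq (h2 ▸ hu) (h2 ▸ hw)
  have e1 : ∀ x : Fin 3 → ℝ, ‖u x‖ * ‖w x‖ = |u x * w x| := by
    intro x; rw [Real.norm_eq_abs, Real.norm_eq_abs, abs_mul]
  have e2 : ∀ (z : (Fin 3 → ℝ) → ℝ) (x : Fin 3 → ℝ), ‖z x‖ ^ (2:ℝ) = z x ^ 2 := by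
    intro z x
    rw [show ((2:ℝ)) = ((2:ℕ):ℝ) by norm_num, Real.rpow_natCast]
    simp [sq_abs]
  simp_rw [e1, e2] at h
  rw [Real.sqrt_eq_rpow, Real.sqrt_eq_rpow]
  exact h

end S6

open S6

/-- Interpolation inequality: `‖Z₃ f‖ ≲ ‖f‖ + ‖f‖^{1/2} ‖Z₃² f‖^{1/2}`. -/
theorem stmt6 :
    ∃ C > (0 : ℝ), ∀ f : (Fin 3 → ℝ) → ℝ,
      ContDiff ℝ (⊤ : ℕ∞) f → HasCompactSupport f →
      L2H (Z3 f) ≤ C * (L2H f + L2H f ^ ((1 : ℝ)/2) * L2H (Z3^[2] f) ^ ((1 : ℝ)/2)) := by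
  refine ⟨1, one_pos, ?_⟩
  intro f hf hs
  have hit : Z3^[2] f = Z3 (Z3 f) := by
    rw [Function.iterate_succ_apply', Function.iterate_one]
  rw [hit, one_mul]
  -- continuity facts on C
  have contf : ContinuousOn f C := hf.continuous.continuousOn
  have contZ : ContinuousOn (Z3 f) C := (continuousOn_Z3 hf).mono C_subset_U
  have contZZ : ContinuousOn (Z3 (Z3 f)) C := (continuousOn_Z3Z3 hf).mono C_subset_U
  have contcoef : ContinuousOn (fun x : Fin 3 → ℝ => 1/(1 + x 2)^2) C := by
    apply continuousOn_const.div (((continuous_const.add (continuous_apply 2)).pow 2).continuousOn)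
    intro x hx
    have : (0:ℝ) ≤ x 2 := hx
    simp only [Pi.add_apply, Pi.pow_apply]; positivity
  -- MemLp facts
  have mf : MemLp f 2 (volume.restrict H) :=
    memL2 hf.continuous.aestronglyMeasurable.restrict contf hs
  have m1 : MemLp (Z3 f) 2 (volume.restrict H) :=
    memL2 (meas_Z3 f).aestronglyMeasurable contZ (hcs_Z3 hs)
  have m2 : MemLp (Z3 (Z3 f)) 2 (volume.restrict H) :=
    memL2 (meas_Z3 (Z3 f)).aestronglyMeasurable contZZ (hcs_Z3Z3 hs)
  -- norms as square roots
  have ha : L2H f = Real.sqrt (∫ x in H, f x ^ 2) := L2H_eq mf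
  have hb : L2H (Z3 f) = Real.sqrt (∫ x in H, Z3 f x ^ 2) := L2H_eq m1
  have hd : L2H (Z3 (Z3 f)) = Real.sqrt (∫ x in H, Z3 (Z3 f) x ^ 2) := L2H_eq m2
  have ha0 : 0 ≤ L2H f := ENNReal.toReal_nonneg
  have hb0 : 0 ≤ L2H (Z3 f) := ENNReal.toReal_nonneg
  have hd0 : 0 ≤ L2H (Z3 (Z3 f)) := ENNReal.toReal_nonneg
  have hb2 : L2H (Z3 f) ^ 2 = ∫ x in H, Z3 f x ^ 2 := by
    rw [hb]; exact Real.sq_sqrt (integral_nonneg fun x => sq_nonneg _)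
  -- integrability of pieces
  have iA : IntegrableOn (fun x => Z3 f x ^ 2) H := integrableOn_H (contZ.pow 2) (hcs_sq (hcs_Z3 hs))
  have iFZ : IntegrableOn (fun x => f x * Z3 f x) H :=
    integrableOn_H (contf.mul contZ) (hcs_Z3 hs).mul_left
  have iB : IntegrableOn (fun x => 1/(1 + x 2)^2 * (f x * Z3 f x)) H :=
    integrableOn_H (contcoef.mul (contf.mul contZ)) (hcs_Z3 hs).mul_left.mul_left
  have iC : IntegrableOn (fun x => f x * Z3 (Z3 f) x) H :=
    integrableOn_H (contf.mul contZZ) (hcs_Z3Z3 hs).mul_left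
  -- the key identity, split
  have hkey := key_H hf hs
  have hsplit : (∫ x in H, Z3 f x ^ 2) + (∫ x in H, 1/(1 + x 2)^2 * (f x * Z3 f x))
      + (∫ x in H, f x * Z3 (Z3 f) x) = 0 := by
    have iAB : IntegrableOn (fun x => Z3 f x ^ 2 + 1/(1 + x 2)^2 * (f x * Z3 f x)) H :=
      iA.add iB
    have e1 := integral_add iAB iC
    have e2 := integral_add iA iB
    have h0 : ∫ x in H, (Z3 f x ^ 2 + 1/(1 + x 2)^2 * (f x * Z3 f x)
        + f x * Z3 (Z3 f) x) = 0 := hkey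
    rw [e1, e2] at h0
    linarith
  -- bounds on the two error terms
  have habs1 : |∫ x in H, 1/(1 + x 2)^2 * (f x * Z3 f x)| ≤ ∫ x in H, |f x * Z3 f x| := by
    have hn := norm_integral_le_integral_norm (μ := volume.restrict H)
      (fun x => 1/(1 + x 2)^2 * (f x * Z3 f x))
    simp only [Real.norm_eq_abs] at hn
    refine le_trans hn ?_
    refine setIntegral_mono_on iB.abs iFZ.abs measurableSet_H (fun x hx => ?_)
    have hx2 : (0:ℝ) < x 2 := hx
    have h1 : |1/(1 + x 2)^2| ≤ 1 := by
      rw [abs_of_pos (by positivity)]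
      rw [div_le_one (by positivity)]
      nlinarith
    calc |1/(1 + x 2)^2 * (f x * Z3 f x)| = |1/(1 + x 2)^2| * |f x * Z3 f x| := abs_mul _ _
      _ ≤ 1 * |f x * Z3 f x| := by
          exact mul_le_mul_of_nonneg_right h1 (abs_nonneg _)
      _ = |f x * Z3 f x| := one_mul _
  have habs2 : |∫ x in H, f x * Z3 (Z3 f) x| ≤ ∫ x in H, |f x * Z3 (Z3 f) x| := by
    have hn := norm_integral_le_integral_norm (μ := volume.restrict H)
      (fun x => f x * Z3 (Z3 f) x)
    simpa only [Real.norm_eq_abs] using hn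
  have hcs1 : (∫ x in H, |f x * Z3 f x|) ≤ L2H f * L2H (Z3 f) := by
    rw [ha, hb]; exact holder mf m1
  have hcs2 : (∫ x in H, |f x * Z3 (Z3 f) x|) ≤ L2H f * L2H (Z3 (Z3 f)) := by
    rw [ha, hd]; exact holder mf m2
  -- assemble quadratic inequality
  have hquad : L2H (Z3 f) ^ 2 ≤ L2H f * L2H (Z3 f) + L2H f * L2H (Z3 (Z3 f)) := by
    rw [hb2]
    have h1 : (∫ x in H, Z3 f x ^ 2)
        = -(∫ x in H, 1/(1 + x 2)^2 * (f x * Z3 f x)) - ∫ x in H, f x * Z3 (Z3 f) x := by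
      linarith [hsplit]
    rw [h1]
    have h2 := neg_abs_le (∫ x in H, 1/(1 + x 2)^2 * (f x * Z3 f x))
    have h3 := neg_abs_le (∫ x in H, f x * Z3 (Z3 f) x)
    linarith [habs1, habs2, hcs1, hcs2]
  -- final algebra : b² ≤ ab + ad ⇒ b ≤ a + √a√d
  set a := L2H f
  set b := L2H (Z3 f)
  set d := L2H (Z3 (Z3 f))
  have hs2 : (a ^ ((1:ℝ)/2) * d ^ ((1:ℝ)/2)) ^ 2 = a * d := by
    rw [mul_pow, ← Real.sqrt_eq_rpow, ← Real.sqrt_eq_rpow, Real.sq_sqrt ha0, Real.sq_sqrt hd0]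
  set s := a ^ ((1:ℝ)/2) * d ^ ((1:ℝ)/2) with hsdef
  have hs0 : 0 ≤ s := by
    rw [hsdef]
    exact mul_nonneg (Real.rpow_nonneg ha0 _) (Real.rpow_nonneg hd0 _)
  nlinarith [hquad, hs2, hs0, ha0, hb0, hd0, sq_nonneg (b - a - s), sq_nonneg (b - s),
    mul_nonneg hs0 hb0, mul_nonneg ha0 hb0, mul_nonneg hs0 ha0]
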